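/- arXiv:2308.09580 — 9 statements merged into one kernel-verified Lean document; each statement's English description precedes it below -/
import Mathlib

section
/- Let r > 0 and define d : ℝ × ℝ → ℝ by d(x,y) = r if x = y, d(x,y) = 2r if 0 < |x − y| ≤ r, and d(x,y) = |x − y| if |x − y| > r. Then the generalized topology μ(d) induced by d is not a topology on ℝ: the set S = B_d(r, 2r + r/10) ∩ B_d(21r/5, 2r + r/10) equals the nonempty open interval (21r/10, r + 21r/10), yet S does not belong to μ(d), i.e., there exist a point s ∈ S such that no ball B_d(x,c) (x ∈ ℝ, c > 0) satisfies s ∈ B_d(x,c) ⊆ S. -/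
/-- A g-quasi metric of index `r` on `X`. -/
def IsGQM {X : Type*} (d : X → X → ℝ) (r : ℝ) : Prop :=
  (∀ x y, r ≤ d x y) ∧ (∀ x y, d x y = r ↔ x = y) ∧
    (∀ x y z, d x y ≤ d x z + d z y)

/-- The open ball of a g-quasi metric. -/
def gball {X : Type*} (d : X → X → ℝ) (x : X) (p : ℝ) : Set X := {y | d x y < p}

/-- The generalized topology induced by a g-quasi metric: `U ∈ mu d` iff every point
of `U` lies in some ball contained in `U`. -/
def mu {X : Type*} (d : X → X → ℝ) : Set (Set X) :=
  {U | ∀ u ∈ U, ∃ x p, 0 < p ∧ u ∈ gball d x p ∧ gball d x p ⊆ U}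

/-- Product g-quasi metric. -/
def prodGQM {X Y : Type*} (dX : X → X → ℝ) (dY : Y → Y → ℝ) :
    X × Y → X × Y → ℝ :=
  fun a b => max (dX a.1 b.1) (dY a.2 b.2)

/-- Cauchy sequence in a g-quasi metric space of index `r`. -/
def CauchySeqGQM {X : Type*} (d : X → X → ℝ) (r : ℝ) (x : ℕ → X) : Prop :=
  ∀ ε > r, ∃ k, ∀ m ≥ k, ∀ n ≥ k, d (x m) (x n) < ε

/-- G-Cauchy sequence in a g-quasi metric space of index `r`. -/
def GCauchySeqGQM {X : Type*} (d : X → X → ℝ) (r : ℝ) (x : ℕ → X) : Prop :=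
  ∀ ε > r, ∃ k, ∀ n ≥ k, d (x n) (x (n + 1)) < ε

/-- Pseudo-Cauchy sequence in a g-quasi metric space of index `r`. -/
def PseudoCauchySeqGQM {X : Type*} (d : X → X → ℝ) (r : ℝ) (x : ℕ → X) : Prop :=
  ∀ ε > r, ∀ k, ∃ p q, p ≠ q ∧ k ≤ p ∧ k ≤ q ∧ d (x p) (x q) < ε

/-- Convergence of a sequence in a g-quasi metric space (i.e. in `(X, μ(d))`). -/
def ConvergesToGQM {X : Type*} (d : X → X → ℝ) (x : ℕ → X) (c : X) : Prop :=
  ∀ y p, 0 < p → c ∈ gball d y p → ∃ k, ∀ n ≥ k, x n ∈ gball d y p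

/-- Cluster point of a sequence in a g-quasi metric space (i.e. in `(X, μ(d))`). -/
def IsClusterPtGQM {X : Type*} (d : X → X → ℝ) (x : ℕ → X) (c : X) : Prop :=
  ∀ y p, 0 < p → c ∈ gball d y p → ∀ k, ∃ n ≥ k, x n ∈ gball d y p

/-- Completeness of a g-quasi metric space of index `r`. -/
def CompleteGQM {X : Type*} (d : X → X → ℝ) (r : ℝ) : Prop :=
  ∀ x : ℕ → X, CauchySeqGQM d r x → ∃ c, ConvergesToGQM d x c

/-- G-completeness of a g-quasi metric space of index `r`. -/
def GCompleteGQM {X : Type*} (d : X → X → ℝ) (r : ℝ) : Prop :=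
  ∀ x : ℕ → X, GCauchySeqGQM d r x → ∃ c, ConvergesToGQM d x c

/-- Weak G-completeness of a g-quasi metric space of index `r`. -/
def WeakGCompleteGQM {X : Type*} (d : X → X → ℝ) (r : ℝ) : Prop :=
  ∀ x : ℕ → X, GCauchySeqGQM d r x → ∃ c, IsClusterPtGQM d x c

/-- Lebesgue property: every pseudo-Cauchy sequence of pairwise distinct terms clusters. -/
def LebesgueGQM {X : Type*} (d : X → X → ℝ) (r : ℝ) : Prop :=
  ∀ x : ℕ → X, PseudoCauchySeqGQM d r x → Function.Injective x →
    ∃ c, IsClusterPtGQM d x c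

/-- Strong Lebesgue property: every pseudo-Cauchy sequence clusters. -/
def StronglyLebesgueGQM {X : Type*} (d : X → X → ℝ) (r : ℝ) : Prop :=
  ∀ x : ℕ → X, PseudoCauchySeqGQM d r x → ∃ c, IsClusterPtGQM d x c

/-- A generalized topology: contains `∅` and is closed under arbitrary unions. -/
def IsGenTop {X : Type*} (μ : Set (Set X)) : Prop :=
  ∅ ∈ μ ∧ ∀ S : Set (Set X), S ⊆ μ → ⋃₀ S ∈ μ

/-- The g-quasi metric of Example 3.7: `d x y = r` if `x = y`, `2r` if `0 < |x-y| ≤ r`,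
and `|x-y|` if `|x-y| > r`. -/
noncomputable def dEx (r : ℝ) (x y : ℝ) : ℝ :=
  if x = y then r else if |x - y| ≤ r then 2 * r else |x - y|


lemma dEx_lt_iff (r p : ℝ) (hr : 0 < r) (hp : 2*r < p) (a y : ℝ) :
    dEx r a y < p ↔ |a - y| < p := by
  unfold dEx
  split_ifs with h1 h2
  · subst h1
    simp only [sub_self, abs_zero]
    constructor <;> intro _ <;> linarith
  · constructor <;> intro _ <;> linarith
  · exact Iff.rfl

lemma dEx_ge (r : ℝ) (hr : 0 < r) (a y : ℝ) : r ≤ dEx r a y := by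
  unfold dEx
  split_ifs with h1 h2
  · exact le_refl r
  · linarith
  · linarith

lemma dEx_self (r a : ℝ) : dEx r a a = r := by simp [dEx]

lemma dEx_near (r : ℝ) (hr : 0 < r) (a y : ℝ) (h1 : a ≠ y) (h2 : |a - y| ≤ r) :
    dEx r a y = 2 * r := by simp [dEx, h1, h2]

lemma dEx_far (r : ℝ) (hr : 0 < r) (a y : ℝ) (h2 : r < |a - y|) :
    dEx r a y = |a - y| := by
  have h1 : a ≠ y := by
    intro h; subst h; simp at h2; linarith
  simp [dEx, h1, not_le.mpr h2]

theorem stmt4 (r : ℝ) (hr : 0 < r) :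
    gball (dEx r) r (2 * r + r / 10) ∩ gball (dEx r) (21 * r / 5) (2 * r + r / 10)
        = Set.Ioo (21 * r / 10) (r + 21 * r / 10) ∧
      ∃ s ∈ gball (dEx r) r (2 * r + r / 10) ∩ gball (dEx r) (21 * r / 5) (2 * r + r / 10),
        ∀ x c, 0 < c →
          ¬ (s ∈ gball (dEx r) x c ∧
              gball (dEx r) x c ⊆
                gball (dEx r) r (2 * r + r / 10) ∩
                  gball (dEx r) (21 * r / 5) (2 * r + r / 10)) := by
  have hp : 2 * r < 2 * r + r / 10 := by linarith
  have hball : ∀ a : ℝ, gball (dEx r) a (2 * r + r / 10)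
      = Set.Ioo (a - (2 * r + r / 10)) (a + (2 * r + r / 10)) := by
    intro a
    ext y
    simp only [gball, Set.mem_setOf_eq, dEx_lt_iff r _ hr hp, Set.mem_Ioo, abs_sub_lt_iff]
    constructor <;> intro ⟨h1, h2⟩ <;> constructor <;> linarith
  have hinter : gball (dEx r) r (2 * r + r / 10) ∩ gball (dEx r) (21 * r / 5) (2 * r + r / 10)
      = Set.Ioo (21 * r / 10) (r + 21 * r / 10) := by
    rw [hball, hball]
    ext y
    simp only [Set.mem_inter_iff, Set.mem_Ioo]
    constructor
    · rintro ⟨⟨h1, h2⟩, ⟨h3, h4⟩⟩; constructor <;> linarith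
    · rintro ⟨h1, h2⟩; refine ⟨⟨?_, ?_⟩, ?_, ?_⟩ <;> linarith
  refine ⟨hinter, 26 * r / 10, ?_, ?_⟩
  · rw [hinter]; constructor <;> [linarith; linarith]
  · intro x c hc ⟨hs, hsub⟩
    rw [hinter] at hsub
    have hrc : r < c := lt_of_le_of_lt (dEx_ge r hr x _) hs
    by_cases hx : x = 26 * r / 10
    · subst hx
      have hy : (26 * r / 10 + (r + c) / 2) ∈ gball (dEx r) (26 * r / 10) c := by
        have : dEx r (26 * r / 10) (26 * r / 10 + (r + c) / 2) = (r + c) / 2 := by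
          rw [dEx_far r hr]
          · rw [abs_sub_comm, add_sub_cancel_left, abs_of_pos (by linarith)]
          · rw [abs_sub_comm, add_sub_cancel_left, abs_of_pos (by linarith)]; linarith
        simp only [gball, Set.mem_setOf_eq, this]; linarith
      have := (hsub hy).2
      linarith
    · have hxmem : x ∈ Set.Ioo (21 * r / 10) (r + 21 * r / 10) := by
        apply hsub
        simp only [gball, Set.mem_setOf_eq, dEx_self]; exact hrc
      obtain ⟨hx1, hx2⟩ := hxmem
      have hnear : |x - 26 * r / 10| ≤ r := by
        rw [abs_sub_le_iff]; constructor <;> linarith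
      have h2rc : 2 * r < c := by
        have hd := dEx_near r hr x (26 * r / 10) hx hnear
        simp only [gball, Set.mem_setOf_eq, hd] at hs; exact hs
      have hy : (x + 2 * r) ∈ gball (dEx r) x c := by
        have : dEx r x (x + 2 * r) = 2 * r := by
          rw [dEx_far r hr]
          · rw [abs_sub_comm, add_sub_cancel_left, abs_of_pos (by linarith)]
          · rw [abs_sub_comm, add_sub_cancel_left, abs_of_pos (by linarith)]; linarith
        simp only [gball, Set.mem_setOf_eq, this]; exact h2rc
      have := (hsub hy).2
      linarith
end

section
/- Let r > 0 and define d : ℝ × ℝ → ℝ by d(x,y) = r if x = y, d(x,y) = 2r if 0 < |x − y| ≤ r, and d(x,y) = |x − y| if |x − y| > r. For ε > r set V_ε = {(x,y) ∈ ℝ × ℝ : d(x,y) < ε}. Then for every δ > r there exist x, y, z ∈ ℝ with d(x,y) < δ and d(y,z) < δ but d(x,z) ≥ 3r/2; that is, no δ > r satisfies V_δ ∘ V_δ ⊆ V_{3r/2}, so {V_ε : ε > r} is not a base for a g-quasi uniformity on ℝ. -/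
theorem stmt5 (r : ℝ) (hr : 0 < r) :
    ∀ δ > r, ∃ x y z : ℝ, dEx r x y < δ ∧ dEx r y z < δ ∧ 3 * r / 2 ≤ dEx r x z := by
  intro δ hδ
  set s := min δ (2 * r) with hs
  have hrs : r < s := lt_min hδ (by linarith)
  have hsδ : s ≤ δ := min_le_left _ _
  refine ⟨0, (r + s) / 2, r + s, ?_, ?_, ?_⟩
  · have h1 : (0 : ℝ) ≠ (r + s) / 2 := by intro h; nlinarith [h.symm]
    have h2 : |0 - (r + s) / 2| = (r + s) / 2 := by
      rw [abs_of_nonpos (by linarith)]; ring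
    simp only [dEx, if_neg h1, h2]
    rw [if_neg (by linarith)]
    linarith
  · have h1 : (r + s) / 2 ≠ r + s := by intro h; nlinarith
    have h2 : |(r + s) / 2 - (r + s)| = (r + s) / 2 := by
      rw [abs_of_nonpos (by linarith)]; ring
    simp only [dEx, if_neg h1, h2]
    rw [if_neg (by linarith)]
    linarith
  · have h1 : (0 : ℝ) ≠ r + s := by intro h; linarith
    have h2 : |0 - (r + s)| = r + s := by
      rw [abs_of_nonpos (by linarith)]; ring
    simp only [dEx, if_neg h1, h2]
    rw [if_neg (by linarith)]
    linarith
end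

section
/- Let d be a g-quasi metric of index r ≥ 0 on a nonempty set X. Then the strong generalized topological space (X, μ(d)) is μ-T₁: for any x, y ∈ X with x ≠ y there exist B₁, B₂ ∈ μ(d) such that x ∈ B₁, y ∉ B₁, y ∈ B₂, and x ∉ B₂. (Indeed, for any p with r < p < min{d(x,y), d(y,x)}, the balls B_d(x,p) and B_d(y,p) serve as B₁ and B₂.) -/
theorem stmt6 {X : Type*} [Nonempty X] (d : X → X → ℝ) (r : ℝ) (hr : 0 ≤ r)
    (hd : IsGQM d r) :
    ∀ x y : X, x ≠ y →
      ∃ B₁ B₂ : Set X, B₁ ∈ mu d ∧ B₂ ∈ mu d ∧ x ∈ B₁ ∧ y ∉ B₁ ∧ y ∈ B₂ ∧ x ∉ B₂ := by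
  obtain ⟨h1, h2, h3⟩ := hd
  intro x y hxy
  have hb : ∀ (z : X) (p : ℝ), 0 < p → z ∈ gball d z p → gball d z p ∈ mu d := by
    intro z p hp hz u hu
    exact ⟨z, p, hp, hu, subset_rfl⟩
  set p := min (d x y) (d y x) with hpdef
  have hpr : r < p := lt_min (lt_of_le_of_ne (h1 x y) (fun h => hxy ((h2 x y).1 h.symm)))
    (lt_of_le_of_ne (h1 y x) (fun h => hxy (((h2 y x).1 h.symm)).symm))
  have hp0 : 0 < p := lt_of_le_of_lt hr hpr
  have hxx : x ∈ gball d x p := by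
    simpa [gball, (h2 x x).2 rfl] using hpr
  have hyy : y ∈ gball d y p := by
    simpa [gball, (h2 y y).2 rfl] using hpr
  refine ⟨gball d x p, gball d y p, hb x p hp0 hxx, hb y p hp0 hyy, hxx, ?_, hyy, ?_⟩
  · simp only [gball, Set.mem_setOf_eq, not_lt]
    exact min_le_left _ _
  · simp only [gball, Set.mem_setOf_eq, not_lt]
    exact min_le_right _ _
end

section
/- Let d be a g-quasi metric of index r ≥ 0 on a nonempty set X. Then every singleton set {x} (x ∈ X) is μ-closed in (X, μ(d)), i.e., X \ {x} ∈ μ(d). -/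
theorem stmt7 {X : Type*} [Nonempty X] (d : X → X → ℝ) (r : ℝ) (hr : 0 ≤ r)
    (hd : IsGQM d r) :
    ∀ x : X, ({x}ᶜ : Set X) ∈ mu d := by
  obtain ⟨h1, h2, h3⟩ := hd
  intro x u hu
  have hne : u ≠ x := hu
  have hlt : r < d u x := lt_of_le_of_ne (h1 u x) (fun h => hne ((h2 u x).mp h.symm))
  refine ⟨u, d u x, lt_of_le_of_lt hr hlt, ?_, ?_⟩
  · show d u u < d u x
    rw [(h2 u u).mpr rfl]; exact hlt
  · intro z hz hzx
    rw [Set.mem_singleton_iff] at hzx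
    subst hzx
    simp only [gball, Set.mem_setOf_eq] at hz
    exact lt_irrefl _ hz
end

section
/- Let r > 0 and define d : ℝ × ℝ → ℝ by d(x,y) = r if x = y, d(x,y) = 2r if 0 < |x − y| ≤ r, and d(x,y) = |x − y| if |x − y| > r, and let d' be the product g-quasi metric of d with itself on ℝ × ℝ, i.e., d'((x,y),(x',y')) = max{d(x,x'), d(y,y')}. Then the map d : (ℝ × ℝ, d') → (ℝ, usual metric) is not g-uniformly continuous: for ε = r/2 and every δ > r there exist (x,y), (x',y') ∈ ℝ × ℝ with d'((x,y),(x',y')) < δ but |d(x,y) − d(x',y')| ≥ r/2. -/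
theorem stmt10 (r : ℝ) (hr : 0 < r) :
    ∀ δ > r, ∃ a b : ℝ × ℝ,
      prodGQM (dEx r) (dEx r) a b < δ ∧ r / 2 ≤ |dEx r a.1 a.2 - dEx r b.1 b.2| := by
  intro δ hδ
  set s : ℝ := min ((r + δ) / 2) (11 * r / 8) with hs
  have hs1 : r < s := lt_min (by linarith) (by linarith)
  have hs2 : s < δ := lt_of_le_of_lt (min_le_left _ _) (by linarith)
  have hs3 : s ≤ 11 * r / 8 := min_le_right _ _
  refine ⟨(0, -r/8), (s, -r/8), ?_, ?_⟩
  · have h1 : dEx r 0 s = s := by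
      unfold dEx
      rw [if_neg (by intro h; linarith [hs1, hr] : ¬ (0:ℝ) = s)]
      rw [if_neg (by rw [abs_of_nonpos (by linarith)]; push_neg; linarith)]
      rw [abs_of_nonpos (by linarith)]; ring
    have h2 : dEx r (-r/8) (-r/8) = r := by unfold dEx; rw [if_pos rfl]
    unfold prodGQM
    simp only [h1, h2]
    rw [max_eq_left (le_of_lt hs1)]; exact hs2
  · have h1 : dEx r 0 (-r/8) = 2 * r := by
      unfold dEx
      rw [if_neg (by intro h; linarith [hr] : ¬ (0:ℝ) = -r/8)]
      rw [if_pos (by rw [abs_of_nonneg (by linarith)]; linarith)]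
    have h2 : dEx r s (-r/8) = s + r/8 := by
      unfold dEx
      rw [if_neg (by intro h; linarith : ¬ s = -r/8)]
      rw [if_neg (by rw [abs_of_nonneg (by linarith)]; push_neg; linarith)]
      rw [abs_of_nonneg (by linarith)]; ring
    simp only [h1, h2]
    rw [abs_of_nonneg (by linarith)]
    linarith
end

section
/- Let r > 0 and define d : ℝ × ℝ → ℝ by d(x,y) = r if x = y, d(x,y) = 2r if 0 < |x − y| ≤ r, and d(x,y) = |x − y| if |x − y| > r. Then the sequence x_n = rn − r/n (n ∈ ℕ, n ≥ 1) is G-Cauchy in (ℝ, d), but no point c ∈ ℝ is a cluster point of (x_n) in (ℝ, d); consequently (ℝ, d) is not weak G-complete. -/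
theorem stmt11 (r : ℝ) (hr : 0 < r) :
    GCauchySeqGQM (dEx r) r (fun n : ℕ => r * (n + 1) - r / (n + 1)) ∧
      (∀ c : ℝ, ¬ IsClusterPtGQM (dEx r) (fun n : ℕ => r * (n + 1) - r / (n + 1)) c) ∧
      ¬ WeakGCompleteGQM (dEx r) r := by
  set s : ℕ → ℝ := fun n : ℕ => r * (n + 1) - r / (n + 1) with hs
  clear_value s
  have hpos : ∀ n : ℕ, (0:ℝ) < (n:ℝ) + 1 := fun n => by positivity
  have hdiff : ∀ n : ℕ, s (n+1) - s n = r + (r/((n:ℝ)+1) - r/((n:ℝ)+2)) := by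
    intro n
    have h1 := hpos n
    have h2 : (0:ℝ) < (n:ℝ) + 2 := by positivity
    simp only [hs]
    push_cast
    field_simp
    ring
  have hgap : ∀ n : ℕ, r < s (n+1) - s n := by
    intro n
    rw [hdiff n]
    have : r/((n:ℝ)+2) < r/((n:ℝ)+1) := by
      apply div_lt_div_of_pos_left hr (hpos n)
      linarith
    linarith
  have hle : ∀ n : ℕ, s (n+1) - s n ≤ r + r/((n:ℝ)+1) := by
    intro n
    rw [hdiff n]
    have : (0:ℝ) ≤ r/((n:ℝ)+2) := by positivity
    linarith
  have hd : ∀ n : ℕ, dEx r (s n) (s (n+1)) = s (n+1) - s n := by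
    intro n
    have hg := hgap n
    have hne : s n ≠ s (n+1) := by intro h; rw [h] at hg; linarith
    have habs : |s n - s (n+1)| = s (n+1) - s n := by
      rw [abs_sub_comm, abs_of_pos]; linarith
    rw [dEx, if_neg hne, habs, if_neg (by linarith)]
  have hlow : ∀ n : ℕ, r * n ≤ s n := by
    intro n
    have : r / ((n:ℝ)+1) ≤ r := by
      rw [div_le_iff₀ (hpos n)]
      nlinarith [Nat.cast_nonneg (α := ℝ) n]
    simp only [hs]; nlinarith
  have hcluster : ∀ c : ℝ, ¬ IsClusterPtGQM (dEx r) s c := by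
    intro c h
    have hcball : c ∈ gball (dEx r) c (3*r/2) := by
      show dEx r c c < 3*r/2
      rw [dEx, if_pos rfl]; linarith
    obtain ⟨K, hK⟩ := exists_nat_gt ((c + 3*r/2)/r)
    obtain ⟨n, hn, hmem⟩ := h c (3*r/2) (by linarith) hcball K
    have hnK : (c + 3*r/2)/r < (n:ℝ) := lt_of_lt_of_le hK (by exact_mod_cast hn)
    have hsn : c + 3*r/2 < s n := by
      have := hlow n
      rw [div_lt_iff₀ hr] at hnK
      nlinarith
    simp only [gball, Set.mem_setOf_eq, dEx] at hmem
    have hne : c ≠ s n := by intro h'; rw [← h'] at hsn; linarith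
    rw [if_neg hne] at hmem
    have habs : |c - s n| = s n - c := by rw [abs_sub_comm, abs_of_pos]; linarith
    rw [habs, if_neg (by linarith)] at hmem
    linarith
  have hgc : GCauchySeqGQM (dEx r) r s := by
    intro ε hε
    obtain ⟨K, hK⟩ := exists_nat_gt (r/(ε - r))
    refine ⟨K, fun n hn => ?_⟩
    rw [hd n]
    have h1 : r/(ε - r) < (n:ℝ) + 1 := by
      have : (K:ℝ) ≤ n := by exact_mod_cast hn
      linarith
    have h2 : r/((n:ℝ)+1) < ε - r := by
      rw [div_lt_iff₀ (hpos n)]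
      rw [div_lt_iff₀ (by linarith : (0:ℝ) < ε - r)] at h1
      nlinarith
    have := hle n
    linarith
  exact ⟨hgc, hcluster, fun h => (hcluster _) (h s hgc).choose_spec⟩
end

section
/- Let (X, d_X) and (Y, d_Y) be g-quasi metric spaces of the same index r ≥ 0 and let d_XY be the product g-quasi metric on X × Y. Then (X × Y, d_XY) is G-complete if and only if both (X, d_X) and (Y, d_Y) are G-complete. -/
theorem stmt17 {X Y : Type*} [Nonempty X] [Nonempty Y]
    (dX : X → X → ℝ) (dY : Y → Y → ℝ) (r : ℝ) (hr : 0 ≤ r)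
    (hX : IsGQM dX r) (hY : IsGQM dY r) :
    GCompleteGQM (prodGQM dX dY) r ↔ GCompleteGQM dX r ∧ GCompleteGQM dY r := by
  obtain ⟨hX1, hX2, hX3⟩ := hX
  obtain ⟨hY1, hY2, hY3⟩ := hY
  constructor
  · intro hp
    constructor
    · intro x hx
      obtain ⟨y0⟩ := ‹Nonempty Y›
      have hc : GCauchySeqGQM (prodGQM dX dY) r (fun n => (x n, y0)) := by
        intro ε hε
        obtain ⟨k, hk⟩ := hx ε hε
        refine ⟨k, fun n hn => ?_⟩
        simp only [prodGQM]
        exact max_lt (hk n hn) (by rw [(hY2 y0 y0).2 rfl]; exact hε)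
      obtain ⟨c, hconv⟩ := hp _ hc
      refine ⟨c.1, fun y p hpp hcy => ?_⟩
      simp only [gball, Set.mem_setOf_eq] at hcy
      have hmem : c ∈ gball (prodGQM dX dY) (y, c.2) p := by
        simp only [gball, prodGQM, Set.mem_setOf_eq]
        exact max_lt hcy (by rw [(hY2 c.2 c.2).2 rfl]; exact lt_of_le_of_lt (hX1 y c.1) hcy)
      obtain ⟨k, hk⟩ := hconv (y, c.2) p hpp hmem
      refine ⟨k, fun n hn => ?_⟩
      have := hk n hn
      simp only [gball, prodGQM, Set.mem_setOf_eq] at this ⊢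
      exact lt_of_le_of_lt (le_max_left _ _) this
    · intro y hy
      obtain ⟨x0⟩ := ‹Nonempty X›
      have hc : GCauchySeqGQM (prodGQM dX dY) r (fun n => (x0, y n)) := by
        intro ε hε
        obtain ⟨k, hk⟩ := hy ε hε
        refine ⟨k, fun n hn => ?_⟩
        simp only [prodGQM]
        exact max_lt (by rw [(hX2 x0 x0).2 rfl]; exact hε) (hk n hn)
      obtain ⟨c, hconv⟩ := hp _ hc
      refine ⟨c.2, fun z p hpp hcz => ?_⟩
      simp only [gball, Set.mem_setOf_eq] at hcz
      have hmem : c ∈ gball (prodGQM dX dY) (c.1, z) p := by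
        simp only [gball, prodGQM, Set.mem_setOf_eq]
        exact max_lt (by rw [(hX2 c.1 c.1).2 rfl]; exact lt_of_le_of_lt (hY1 z c.2) hcz) hcz
      obtain ⟨k, hk⟩ := hconv (c.1, z) p hpp hmem
      refine ⟨k, fun n hn => ?_⟩
      have := hk n hn
      simp only [gball, prodGQM, Set.mem_setOf_eq] at this ⊢
      exact lt_of_le_of_lt (le_max_right _ _) this
  · rintro ⟨hXc, hYc⟩ z hz
    have h1 : GCauchySeqGQM dX r (fun n => (z n).1) := by
      intro ε hε
      obtain ⟨k, hk⟩ := hz ε hε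
      exact ⟨k, fun n hn => lt_of_le_of_lt (le_max_left _ _) (hk n hn)⟩
    have h2 : GCauchySeqGQM dY r (fun n => (z n).2) := by
      intro ε hε
      obtain ⟨k, hk⟩ := hz ε hε
      exact ⟨k, fun n hn => lt_of_le_of_lt (le_max_right _ _) (hk n hn)⟩
    obtain ⟨cX, hcX⟩ := hXc _ h1
    obtain ⟨cY, hcY⟩ := hYc _ h2
    refine ⟨(cX, cY), fun w p hpp hw => ?_⟩
    simp only [gball, prodGQM, Set.mem_setOf_eq] at hw
    obtain ⟨k1, hk1⟩ := hcX w.1 p hpp (lt_of_le_of_lt (le_max_left _ _) hw)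
    obtain ⟨k2, hk2⟩ := hcY w.2 p hpp (lt_of_le_of_lt (le_max_right _ _) hw)
    refine ⟨max k1 k2, fun n hn => ?_⟩
    have e1 := hk1 n (le_trans (le_max_left _ _) hn)
    have e2 := hk2 n (le_trans (le_max_right _ _) hn)
    simp only [gball, Set.mem_setOf_eq] at e1 e2 ⊢
    exact max_lt e1 e2
end

section
/- Let (X, d_X) and (Y, d_Y) be g-quasi metric spaces of the same index r ≥ 0 and let d_XY be the product g-quasi metric on X × Y. If (X × Y, d_XY) is weak G-complete, then both (X, d_X) and (Y, d_Y) are weak G-complete. -/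
theorem stmt18 {X Y : Type*} [Nonempty X] [Nonempty Y]
    (dX : X → X → ℝ) (dY : Y → Y → ℝ) (r : ℝ) (hr : 0 ≤ r)
    (hX : IsGQM dX r) (hY : IsGQM dY r)
    (h : WeakGCompleteGQM (prodGQM dX dY) r) :
    WeakGCompleteGQM dX r ∧ WeakGCompleteGQM dY r := by
  obtain ⟨y₀⟩ := ‹Nonempty Y›
  obtain ⟨x₀⟩ := ‹Nonempty X›
  constructor
  · intro x hx
    have hcauchy : GCauchySeqGQM (prodGQM dX dY) r (fun n => (x n, y₀)) := by
      intro ε hε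
      obtain ⟨k, hk⟩ := hx ε hε
      refine ⟨k, fun n hn => ?_⟩
      simp only [prodGQM, max_lt_iff]
      exact ⟨hk n hn, by rw [(hY.2.1 y₀ y₀).2 rfl]; exact hε⟩
    obtain ⟨⟨cX, cY⟩, hc⟩ := h _ hcauchy
    refine ⟨cX, fun y p hp hmem k => ?_⟩
    have hball : (cX, cY) ∈ gball (prodGQM dX dY) (y, cY) p := by
      simp only [gball, prodGQM, Set.mem_setOf_eq, max_lt_iff]
      exact ⟨hmem, by rw [(hY.2.1 cY cY).2 rfl]; exact lt_of_le_of_lt (hX.1 y cX) hmem⟩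
    obtain ⟨n, hn, hnb⟩ := hc (y, cY) p hp hball k
    exact ⟨n, hn, ((max_lt_iff.1 hnb).1 : dX y (x n) < p)⟩
  · intro y hy
    have hcauchy : GCauchySeqGQM (prodGQM dX dY) r (fun n => (x₀, y n)) := by
      intro ε hε
      obtain ⟨k, hk⟩ := hy ε hε
      refine ⟨k, fun n hn => ?_⟩
      simp only [prodGQM, max_lt_iff]
      exact ⟨by rw [(hX.2.1 x₀ x₀).2 rfl]; exact hε, hk n hn⟩
    obtain ⟨⟨cX, cY⟩, hc⟩ := h _ hcauchy
    refine ⟨cY, fun z p hp hmem k => ?_⟩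
    have hball : (cX, cY) ∈ gball (prodGQM dX dY) (cX, z) p := by
      simp only [gball, prodGQM, Set.mem_setOf_eq, max_lt_iff]
      exact ⟨by rw [(hX.2.1 cX cX).2 rfl]; exact lt_of_le_of_lt (hY.1 z cY) hmem, hmem⟩
    obtain ⟨n, hn, hnb⟩ := hc (cX, z) p hp hball k
    exact ⟨n, hn, ((max_lt_iff.1 hnb).2 : dY z (y n) < p)⟩
end

section
/- Let (X, d_X) and (Y, d_Y) be g-quasi metric spaces of the same index r ≥ 0 and let d_XY be the product g-quasi metric on X × Y. If (X × Y, d_XY) is Lebesgue (respectively, strongly Lebesgue), then both (X, d_X) and (Y, d_Y) are Lebesgue (respectively, strongly Lebesgue). -/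
theorem stmt19 {X Y : Type*} [Nonempty X] [Nonempty Y]
    (dX : X → X → ℝ) (dY : Y → Y → ℝ) (r : ℝ) (hr : 0 ≤ r)
    (hX : IsGQM dX r) (hY : IsGQM dY r) :
    (LebesgueGQM (prodGQM dX dY) r → LebesgueGQM dX r ∧ LebesgueGQM dY r) ∧
      (StronglyLebesgueGQM (prodGQM dX dY) r →
        StronglyLebesgueGQM dX r ∧ StronglyLebesgueGQM dY r) := by
  obtain ⟨x₀⟩ := ‹Nonempty X›
  obtain ⟨y₀⟩ := ‹Nonempty Y›
  have hXr : ∀ x : X, dX x x = r := fun x => (hX.2.1 x x).mpr rfl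
  have hYr : ∀ y : Y, dY y y = r := fun y => (hY.2.1 y y).mpr rfl
  have pcX : ∀ x : ℕ → X, PseudoCauchySeqGQM dX r x →
      PseudoCauchySeqGQM (prodGQM dX dY) r (fun n => (x n, y₀)) := by
    intro x hpc ε hε k
    obtain ⟨p, q, hpq, hkp, hkq, hd⟩ := hpc ε hε k
    exact ⟨p, q, hpq, hkp, hkq, by
      simp only [prodGQM, hYr]; exact max_lt hd hε⟩
  have pcY : ∀ y : ℕ → Y, PseudoCauchySeqGQM dY r y →
      PseudoCauchySeqGQM (prodGQM dX dY) r (fun n => (x₀, y n)) := by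
    intro y hpc ε hε k
    obtain ⟨p, q, hpq, hkp, hkq, hd⟩ := hpc ε hε k
    exact ⟨p, q, hpq, hkp, hkq, by
      simp only [prodGQM, hXr]; exact max_lt hε hd⟩
  have clX : ∀ (x : ℕ → X) (c : X × Y),
      IsClusterPtGQM (prodGQM dX dY) (fun n => (x n, y₀)) c →
      IsClusterPtGQM dX x c.1 := by
    intro x c hc y p hp hcy k
    have hrp : r < p := lt_of_le_of_lt (hX.1 y c.1) hcy
    have hcball : c ∈ gball (prodGQM dX dY) (y, c.2) p := by
      simp only [gball, prodGQM, Set.mem_setOf_eq, hYr]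
      exact max_lt hcy hrp
    obtain ⟨n, hn, hmem⟩ := hc (y, c.2) p hp hcball k
    exact ⟨n, hn, show dX y (x n) < p from lt_of_le_of_lt (le_max_left _ _) hmem⟩
  have clY : ∀ (y : ℕ → Y) (c : X × Y),
      IsClusterPtGQM (prodGQM dX dY) (fun n => (x₀, y n)) c →
      IsClusterPtGQM dY y c.2 := by
    intro y c hc z p hp hcy k
    have hrp : r < p := lt_of_le_of_lt (hY.1 z c.2) hcy
    have hcball : c ∈ gball (prodGQM dX dY) (c.1, z) p := by
      simp only [gball, prodGQM, Set.mem_setOf_eq, hXr]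
      exact max_lt hrp hcy
    obtain ⟨n, hn, hmem⟩ := hc (c.1, z) p hp hcball k
    exact ⟨n, hn, show dY z (y n) < p from lt_of_le_of_lt (le_max_right _ _) hmem⟩
  constructor
  · intro hL
    constructor
    · intro x hpc hinj
      obtain ⟨c, hc⟩ := hL _ (pcX x hpc)
        (fun a b hab => hinj (congrArg Prod.fst hab))
      exact ⟨c.1, clX x c hc⟩
    · intro y hpc hinj
      obtain ⟨c, hc⟩ := hL _ (pcY y hpc)
        (fun a b hab => hinj (congrArg Prod.snd hab))
      exact ⟨c.2, clY y c hc⟩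
  · intro hL
    constructor
    · intro x hpc
      obtain ⟨c, hc⟩ := hL _ (pcX x hpc)
      exact ⟨c.1, clX x c hc⟩
    · intro y hpc
      obtain ⟨c, hc⟩ := hL _ (pcY y hpc)
      exact ⟨c.2, clY y c hc⟩
end
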